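/- arXiv:1104.0961 — 5 statements merged into one kernel-verified Lean document; each statement's English description precedes it below -/
import Mathlib

section
/- (Crossout Board Lemma, Alice's axis) Let D be a dinner with totally ordered preferences and D' ⊆ D a subdinner. Let m_1,...,m_n be the crossout sequence of D and m'_1,...,m'_k the crossout sequence of D' (k = |D'|). Then for every odd index i ≤ k, the first coordinate of m'_i is at least the first coordinate of m_i. -/
open Finset

/-- One step of the crossout process: at Alice's steps remove the remaining morsel of
minimal first coordinate, at Bob's steps the one of minimal second coordinate. -/
noncomputable def coAux (turnA : Bool) (D : Finset (ℝ × ℝ)) : List (ℝ × ℝ) :=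
  if h : D.Nonempty then
    (if turnA then (Finset.exists_min_image D Prod.fst h).choose
      else (Finset.exists_min_image D Prod.snd h).choose) ::
      coAux (!turnA)
        (D.erase (if turnA then (Finset.exists_min_image D Prod.fst h).choose
          else (Finset.exists_min_image D Prod.snd h).choose))
  else []
termination_by D.card
decreasing_by
  apply Finset.card_erase_lt_of_mem
  split
  · exact (Finset.exists_min_image D Prod.fst h).choose_spec.1
  · exact (Finset.exists_min_image D Prod.snd h).choose_spec.1

/-- The crossout sequence of a dinner, as a list `[m₁, m₂, …, mₙ]`. -/
noncomputable def crossoutList (D : Finset (ℝ × ℝ)) : List (ℝ × ℝ) := coAux true D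

/-- `crossout D i` is the `i`-th morsel `mᵢ` (1-indexed) of the crossout sequence of `D`. -/
noncomputable def crossout (D : Finset (ℝ × ℝ)) (i : ℕ) : ℝ × ℝ :=
  (crossoutList D).getD (i - 1) (0, 0)

/-- Totally ordered preferences: distinct morsels have distinct first coordinates and
distinct second coordinates. -/
def TotallyOrderedPrefs (D : Finset (ℝ × ℝ)) : Prop :=
  (∀ p ∈ D, ∀ q ∈ D, p.1 = q.1 → p = q) ∧ (∀ p ∈ D, ∀ q ∈ D, p.2 = q.2 → p = q)

/-- Alice's crossout score: sum of first coordinates of the even-indexed crossout morsels. -/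
noncomputable def chiA (D : Finset (ℝ × ℝ)) : ℝ :=
  ∑ i ∈ Finset.Icc 1 D.card, if Even i then (crossout D i).1 else 0

/-- Bob's crossout score: sum of second coordinates of the odd-indexed crossout morsels. -/
noncomputable def chiB (D : Finset (ℝ × ℝ)) : ℝ :=
  ∑ i ∈ Finset.Icc 1 D.card, if Odd i then (crossout D i).2 else 0

/-!
Run the crossout processes of `D` and of a subdinner `D'` side by side. After every step the
remainder of `D'` is still contained in the remainder of `D`: if the morsel removed from `D` is
still present in `D'`, it is minimal there as well, so by distinctness of coordinates it is
also the morsel removed from `D'`. Hence at every step the morsel removed from `D` is a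
minimum over a superset, and its coordinate for the current turn is the smaller one; at Alice's
(odd) steps this is the first coordinate.
-/

noncomputable def turnCoord (t : Bool) (p : ℝ × ℝ) : ℝ := if t then p.1 else p.2

noncomputable def crossoutPick (t : Bool) (D : Finset (ℝ × ℝ)) (h : D.Nonempty) : ℝ × ℝ :=
  if t then (D.exists_min_image Prod.fst h).choose else (D.exists_min_image Prod.snd h).choose

lemma crossoutPick_mem (t : Bool) (D : Finset (ℝ × ℝ)) (h : D.Nonempty) :
    crossoutPick t D h ∈ D := by
  cases t
  · exact (D.exists_min_image Prod.snd h).choose_spec.1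
  · exact (D.exists_min_image Prod.fst h).choose_spec.1

lemma turnCoord_crossoutPick_le (t : Bool) (D : Finset (ℝ × ℝ)) (h : D.Nonempty)
    {x : ℝ × ℝ} (hx : x ∈ D) : turnCoord t (crossoutPick t D h) ≤ turnCoord t x := by
  cases t
  · exact (D.exists_min_image Prod.snd h).choose_spec.2 x hx
  · exact (D.exists_min_image Prod.fst h).choose_spec.2 x hx

lemma coAux_of_nonempty (t : Bool) (D : Finset (ℝ × ℝ)) (h : D.Nonempty) :
    coAux t D = crossoutPick t D h :: coAux (!t) (D.erase (crossoutPick t D h)) := by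
  rw [coAux, dif_pos h]
  rfl

namespace TotallyOrderedPrefs

lemma mono {D D' : Finset (ℝ × ℝ)} (hD : TotallyOrderedPrefs D) (hsub : D' ⊆ D) :
    TotallyOrderedPrefs D' :=
  ⟨fun p hp q hq => hD.1 p (hsub hp) q (hsub hq), fun p hp q hq => hD.2 p (hsub hp) q (hsub hq)⟩

lemma eq_of_turnCoord_eq {D : Finset (ℝ × ℝ)} (hD : TotallyOrderedPrefs D) (t : Bool)
    {p q : ℝ × ℝ} (hp : p ∈ D) (hq : q ∈ D) (h : turnCoord t p = turnCoord t q) : p = q := by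
  cases t
  · exact hD.2 p hp q hq h
  · exact hD.1 p hp q hq h

end TotallyOrderedPrefs

lemma erase_crossoutPick_subset {D D' : Finset (ℝ × ℝ)} (hsub : D' ⊆ D)
    (hD : TotallyOrderedPrefs D) (t : Bool) (hD' : D'.Nonempty) :
    D'.erase (crossoutPick t D' hD') ⊆ D.erase (crossoutPick t D (hD'.mono hsub)) := by
  intro x hx
  obtain ⟨hx_ne, hxD'⟩ := Finset.mem_erase.mp hx
  refine Finset.mem_erase.mpr ⟨fun hx_eq => hx_ne ?_, hsub hxD'⟩
  have hpick'D := hsub (crossoutPick_mem t D' hD')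
  subst hx_eq
  exact hD.eq_of_turnCoord_eq t (hsub hxD') hpick'D <| le_antisymm
    (turnCoord_crossoutPick_le t D _ hpick'D) (turnCoord_crossoutPick_le t D' hD' hxD')

/-- Steps are 0-indexed here, while `crossout` is 1-indexed. -/
theorem turnCoord_getD_coAux_le_of_subset (j : ℕ) (t : Bool) {D D' : Finset (ℝ × ℝ)}
    (hsub : D' ⊆ D) (hD : TotallyOrderedPrefs D) (hj : j < D'.card) :
    turnCoord (if Even j then t else !t) ((coAux t D).getD j (0, 0)) ≤
      turnCoord (if Even j then t else !t) ((coAux t D').getD j (0, 0)) := by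
  induction j generalizing t D D' with
  | zero =>
    have hD' : D'.Nonempty := Finset.card_pos.mp hj
    rw [coAux_of_nonempty t D (hD'.mono hsub), coAux_of_nonempty t D' hD']
    exact turnCoord_crossoutPick_le t D (hD'.mono hsub) (hsub (crossoutPick_mem t D' hD'))
  | succ j ih =>
    have hD' : D'.Nonempty := Finset.card_pos.mp (by omega)
    have hturn : (if Even (j + 1) then t else !t) = if Even j then !t else !!t := by
      by_cases h : Even j <;> simp [h, Nat.even_add_one]
    have hcard : j < (D'.erase (crossoutPick t D' hD')).card := by
      rw [Finset.card_erase_of_mem (crossoutPick_mem t D' hD')]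
      omega
    rw [coAux_of_nonempty t D (hD'.mono hsub), coAux_of_nonempty t D' hD', hturn]
    exact ih (!t) (erase_crossoutPick_subset hsub hD t hD') (hD.mono (Finset.erase_subset _ D))
      hcard

/-- Crossout Board Lemma, Alice's axis: on a subdinner, each odd label sits at least as
far from the origin along Alice's axis. -/
theorem crossout_board_lemma_alice (D D' : Finset (ℝ × ℝ)) (hsub : D' ⊆ D)
    (hD : TotallyOrderedPrefs D) :
    ∀ i : ℕ, Odd i → i ≤ D'.card → (crossout D i).1 ≤ (crossout D' i).1 := by
  rintro _ ⟨m, rfl⟩ hle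
  have h := turnCoord_getD_coAux_le_of_subset (2 * m) true hsub hD (by omega)
  simpa [crossout, crossoutList, turnCoord] using h
end

section
/- (Main Lemma, first player Alice) Let D be a dinner with an even number n of morsels (so Alice moves first and Bob moves last), and let m be any morsel of D. Then u_A(m) + χ_A(D − m) ≤ χ_A(D), where u_A(m) is the first coordinate of m. -/
open Finset

/-!
Write `χ(D)` for Alice's crossout score and `ψ(D)` for her score in the crossout of `D` that
starts with Bob's step. Peeling off the first crossed-out morsel relates the two:
`χ(D) = ψ(D - f)` for the morsel `f` of minimal first coordinate and `ψ(D) = g₁ + χ(D - g)`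
for the morsel `g` of minimal second coordinate. The Main Lemma is proved by strong induction
on `|D|` together with three companion inequalities: for odd `|D|`, `x + χ(D) ≤ ψ(D)` whenever
`x` is below every first coordinate and `m₁ + ψ(D - m) ≤ ψ(D)`; for even `|D|`, `ψ(D) ≤ χ(D)`.
Each case peels `f` or `g` off `D` (and off `D - m`) and compares the results by the
induction hypothesis on the smaller dinners.
-/

lemma Finset.odd_card_erase_of_even {α : Type*} [DecidableEq α] {s : Finset α} {a : α}
    (hs : Even s.card) (ha : a ∈ s) : Odd (s.erase a).card := by
  rw [card_erase_of_mem ha]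
  exact Nat.Even.sub_odd (card_pos.2 ⟨a, ha⟩) hs odd_one

lemma Finset.even_card_erase_of_odd {α : Type*} [DecidableEq α] {s : Finset α} {a : α}
    (hs : Odd s.card) (ha : a ∈ s) : Even (s.erase a).card := by
  rw [card_erase_of_mem ha]
  exact Nat.Odd.sub_odd hs odd_one

/-- The sum of the first coordinates of the entries of a list at the positions `i` with `k + i`
even. -/
noncomputable def altFstSum : ℕ → List (ℝ × ℝ) → ℝ
  | _, [] => 0
  | k, a :: l => (if Even k then a.1 else 0) + altFstSum (k + 1) l

lemma altFstSum_eq_sum (k : ℕ) (l : List (ℝ × ℝ)) :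
    altFstSum k l = ∑ i ∈ range l.length, if Even (k + i) then (l.getD i (0, 0)).1 else 0 := by
  induction l generalizing k with
  | nil => rfl
  | cons a l ih =>
    rw [altFstSum, ih, List.length_cons, sum_range_succ']
    simp only [List.getD_cons_succ, List.getD_cons_zero, add_zero, Nat.add_right_comm k 1,
      add_assoc, add_comm]

lemma altFstSum_add_two (k : ℕ) (l : List (ℝ × ℝ)) : altFstSum (k + 2) l = altFstSum k l := by
  simp only [altFstSum_eq_sum, Nat.add_right_comm k 2, Nat.even_add, even_two, iff_true]

lemma length_coAux (t : Bool) (D : Finset (ℝ × ℝ)) : (coAux t D).length = D.card := by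
  induction t, D using coAux.induct with
  | case1 t D h ih =>
    rw [dite_eq_ite] at ih
    rw [coAux, dif_pos h, List.length_cons, ih, card_erase_add_one]
    split
    · exact (D.exists_min_image Prod.fst h).choose_spec.1
    · exact (D.exists_min_image Prod.snd h).choose_spec.1
  | case2 t D h =>
    rw [coAux, dif_neg h, not_nonempty_iff_eq_empty.1 h]
    rfl

lemma chiA_eq_altFstSum (D : Finset (ℝ × ℝ)) : chiA D = altFstSum 1 (crossoutList D) := by
  rw [chiA, altFstSum_eq_sum, crossoutList, length_coAux, ← Ico_add_one_right_eq_Icc,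
    sum_Ico_eq_sum_range, Nat.add_sub_cancel]
  simp only [crossout, crossoutList, Nat.add_sub_cancel_left]

/-- `ψ(D)`: Alice's crossout score when the crossout of `D` starts with Bob's step. -/
noncomputable def chiABobFirst (D : Finset (ℝ × ℝ)) : ℝ := altFstSum 0 (coAux false D)

lemma TotallyOrderedPrefs.mono_s6 {D E : Finset (ℝ × ℝ)} (hD : TotallyOrderedPrefs D) (h : E ⊆ D) :
    TotallyOrderedPrefs E :=
  ⟨fun p hp q hq => hD.1 p (h hp) q (h hq), fun p hp q hq => hD.2 p (h hp) q (h hq)⟩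

section Unfolding

variable {D : Finset (ℝ × ℝ)} {a : ℝ × ℝ}

lemma coAux_true_eq_cons (hD : TotallyOrderedPrefs D) (ha : a ∈ D) (hmin : ∀ p ∈ D, a.1 ≤ p.1) :
    coAux true D = a :: coAux false (D.erase a) := by
  have h : D.Nonempty := ⟨a, ha⟩
  obtain ⟨hmem, hle⟩ := (D.exists_min_image Prod.fst h).choose_spec
  have hchoose : (D.exists_min_image Prod.fst h).choose = a :=
    hD.1 _ hmem _ ha (le_antisymm (hle a ha) (hmin _ hmem))
  rw [coAux, dif_pos h]
  simp only [if_true, Bool.not_true, hchoose]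

lemma coAux_false_eq_cons (hD : TotallyOrderedPrefs D) (ha : a ∈ D) (hmin : ∀ p ∈ D, a.2 ≤ p.2) :
    coAux false D = a :: coAux true (D.erase a) := by
  have h : D.Nonempty := ⟨a, ha⟩
  obtain ⟨hmem, hle⟩ := (D.exists_min_image Prod.snd h).choose_spec
  have hchoose : (D.exists_min_image Prod.snd h).choose = a :=
    hD.2 _ hmem _ ha (le_antisymm (hle a ha) (hmin _ hmem))
  rw [coAux, dif_pos h]
  simp only [Bool.false_eq_true, if_false, Bool.not_false, hchoose]

lemma chiA_eq_chiABobFirst_erase (hD : TotallyOrderedPrefs D) (ha : a ∈ D)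
    (hmin : ∀ p ∈ D, a.1 ≤ p.1) : chiA D = chiABobFirst (D.erase a) := by
  rw [chiA_eq_altFstSum, crossoutList, coAux_true_eq_cons hD ha hmin, altFstSum,
    altFstSum_add_two, chiABobFirst]
  simp

lemma chiABobFirst_eq_add_chiA_erase (hD : TotallyOrderedPrefs D) (ha : a ∈ D)
    (hmin : ∀ p ∈ D, a.2 ≤ p.2) : chiABobFirst D = a.1 + chiA (D.erase a) := by
  rw [chiABobFirst, coAux_false_eq_cons hD ha hmin, altFstSum, chiA_eq_altFstSum, crossoutList]
  simp

end Unfolding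

lemma chiABobFirst_empty : chiABobFirst ∅ = 0 := by
  rw [chiABobFirst, coAux, dif_neg Finset.not_nonempty_empty, altFstSum]

structure CrossoutBounds (D : Finset (ℝ × ℝ)) : Prop where
  add_chiA_erase_le : Even D.card → ∀ m ∈ D, m.1 + chiA (D.erase m) ≤ chiA D
  add_chiA_le_chiABobFirst :
    Odd D.card → ∀ x : ℝ, (∀ p ∈ D, x ≤ p.1) → x + chiA D ≤ chiABobFirst D
  add_chiABobFirst_erase_le :
    Odd D.card → ∀ m ∈ D, m.1 + chiABobFirst (D.erase m) ≤ chiABobFirst D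
  chiABobFirst_le_chiA : Even D.card → chiABobFirst D ≤ chiA D

section Induction

variable {D : Finset (ℝ × ℝ)} (hD : TotallyOrderedPrefs D) (ih : ∀ E ⊂ D, CrossoutBounds E)
include hD ih

lemma add_chiA_erase_le_of_ssubset (heven : Even D.card) {m : ℝ × ℝ} (hm : m ∈ D) :
    m.1 + chiA (D.erase m) ≤ chiA D := by
  obtain ⟨f, hf, hfmin⟩ := D.exists_min_image Prod.fst ⟨m, hm⟩
  have hodd := odd_card_erase_of_even heven hf
  rw [chiA_eq_chiABobFirst_erase hD hf hfmin]
  by_cases hmf : m = f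
  · subst hmf
    exact (ih _ (erase_ssubset hf)).add_chiA_le_chiABobFirst hodd m.1
      fun p hp => hfmin p (mem_of_mem_erase hp)
  · rw [chiA_eq_chiABobFirst_erase (hD.mono_s6 (erase_subset m D)) (mem_erase.2 ⟨Ne.symm hmf, hf⟩)
      fun p hp => hfmin p (mem_of_mem_erase hp), erase_right_comm]
    exact (ih _ (erase_ssubset hf)).add_chiABobFirst_erase_le hodd m (mem_erase.2 ⟨hmf, hm⟩)

lemma add_chiA_le_chiABobFirst_of_ssubset (hodd : Odd D.card) {x : ℝ} (hx : ∀ p ∈ D, x ≤ p.1) :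
    x + chiA D ≤ chiABobFirst D := by
  have hne : D.Nonempty := card_pos.1 hodd.pos
  obtain ⟨f, hf, hfmin⟩ := D.exists_min_image Prod.fst hne
  obtain ⟨g, hg, hgmin⟩ := D.exists_min_image Prod.snd hne
  have hxf := hx f hf
  rw [chiA_eq_chiABobFirst_erase hD hf hfmin, chiABobFirst_eq_add_chiA_erase hD hg hgmin]
  by_cases hfg : f = g
  · subst hfg
    have := (ih _ (erase_ssubset hf)).chiABobFirst_le_chiA (even_card_erase_of_odd hodd hf)
    linarith
  · rw [chiABobFirst_eq_add_chiA_erase (hD.mono_s6 (erase_subset f D))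
      (mem_erase.2 ⟨Ne.symm hfg, hg⟩) fun p hp => hgmin p (mem_of_mem_erase hp), erase_right_comm]
    have := (ih _ (erase_ssubset hg)).add_chiA_erase_le (even_card_erase_of_odd hodd hg) f
      (mem_erase.2 ⟨hfg, hf⟩)
    linarith

lemma add_chiABobFirst_erase_le_of_ssubset (hodd : Odd D.card) {m : ℝ × ℝ} (hm : m ∈ D) :
    m.1 + chiABobFirst (D.erase m) ≤ chiABobFirst D := by
  obtain ⟨g, hg, hgmin⟩ := D.exists_min_image Prod.snd ⟨m, hm⟩
  have heven := even_card_erase_of_odd hodd hg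
  rw [chiABobFirst_eq_add_chiA_erase hD hg hgmin]
  by_cases hmg : m = g
  · subst hmg
    have := (ih _ (erase_ssubset hm)).chiABobFirst_le_chiA heven
    linarith
  · rw [chiABobFirst_eq_add_chiA_erase (hD.mono_s6 (erase_subset m D))
      (mem_erase.2 ⟨Ne.symm hmg, hg⟩) fun p hp => hgmin p (mem_of_mem_erase hp), erase_right_comm]
    have := (ih _ (erase_ssubset hg)).add_chiA_erase_le heven m (mem_erase.2 ⟨hmg, hm⟩)
    linarith

lemma chiABobFirst_le_chiA_of_ssubset (heven : Even D.card) : chiABobFirst D ≤ chiA D := by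
  rcases D.eq_empty_or_nonempty with rfl | hne
  · simp [chiABobFirst_empty, chiA]
  obtain ⟨f, hf, hfmin⟩ := D.exists_min_image Prod.fst hne
  obtain ⟨g, hg, hgmin⟩ := D.exists_min_image Prod.snd hne
  rw [chiA_eq_chiABobFirst_erase hD hf hfmin, chiABobFirst_eq_add_chiA_erase hD hg hgmin]
  by_cases hfg : f = g
  · subst hfg
    have := (ih _ (erase_ssubset hf)).add_chiA_le_chiABobFirst (odd_card_erase_of_even heven hf)
      f.1 fun p hp => hfmin p (mem_of_mem_erase hp)
    linarith
  · have hfg' : f ∈ D.erase g := mem_erase.2 ⟨hfg, hf⟩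
    have hgf' : g ∈ D.erase f := mem_erase.2 ⟨Ne.symm hfg, hg⟩
    rw [chiA_eq_chiABobFirst_erase (hD.mono_s6 (erase_subset g D)) hfg'
      fun p hp => hfmin p (mem_of_mem_erase hp),
      chiABobFirst_eq_add_chiA_erase (hD.mono_s6 (erase_subset f D)) hgf'
      fun p hp => hgmin p (mem_of_mem_erase hp), erase_right_comm]
    have := (ih _ ((erase_subset g _).trans_ssubset (erase_ssubset hf))).chiABobFirst_le_chiA
      (even_card_erase_of_odd (odd_card_erase_of_even heven hf) hgf')
    linarith

end Induction

lemma crossoutBounds {D : Finset (ℝ × ℝ)} (hD : TotallyOrderedPrefs D) : CrossoutBounds D := by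
  induction D using Finset.strongInduction with
  | H D ih =>
    have ih' : ∀ E ⊂ D, CrossoutBounds E := fun E hE => ih E hE (hD.mono_s6 hE.subset)
    exact ⟨add_chiA_erase_le_of_ssubset hD ih', add_chiA_le_chiABobFirst_of_ssubset hD ih',
      add_chiABobFirst_erase_le_of_ssubset hD ih', chiABobFirst_le_chiA_of_ssubset hD ih'⟩

/-- Main Lemma, first player Alice: eating any first morsel m gives Alice at most her
crossout score. -/
theorem main_lemma_alice (D : Finset (ℝ × ℝ)) (hD : TotallyOrderedPrefs D)
    (hn : Even D.card) (m : ℝ × ℝ) (hm : m ∈ D) :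
    m.1 + chiA (D.erase m) ≤ chiA D :=
  (crossoutBounds hD).add_chiA_erase_le hn m hm
end

section
/- If both players play the crossout strategy, then the first player to move eats her/his favourite morsel at some point during the dinner. Precisely: if |D| = n is even, then Alice's favourite morsel (maximal first coordinate) is one of the even-indexed crossout morsels m_2, m_4, ...; if n is odd, then Bob's favourite morsel (maximal second coordinate) is one of the odd-indexed crossout morsels m_1, m_3, .... -/
open Finset

/-!
Alice's favourite morsel `m` has maximal first coordinate. If it were crossed out at an odd step,
it would then be the remaining morsel of minimal first coordinate, so all remaining morsels would
share its first coordinate and `m` would be the last one, `mₙ` with `n` odd. Symmetrically, Bob's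
favourite is crossed out at an odd step unless it is `mₙ` with `n` even.
-/

def crossoutKey : Bool → ℝ × ℝ → ℝ
  | true => Prod.fst
  | false => Prod.snd

lemma coAux_eq_cons (turnA : Bool) {D : Finset (ℝ × ℝ)} (hD : D.Nonempty) :
    ∃ x ∈ D, (∀ p ∈ D, crossoutKey turnA x ≤ crossoutKey turnA p) ∧
      coAux turnA D = x :: coAux (!turnA) (D.erase x) := by
  rw [coAux, dif_pos hD]
  cases turnA
  · obtain ⟨hmem, hmin⟩ := (D.exists_min_image Prod.snd hD).choose_spec
    exact ⟨_, hmem, hmin, rfl⟩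
  · obtain ⟨hmem, hmin⟩ := (D.exists_min_image Prod.fst hD).choose_spec
    exact ⟨_, hmem, hmin, rfl⟩

/-- `turnA = c ↔ Even k` says that step `k` (0-indexed) of `coAux turnA` minimises
`crossoutKey c`. -/
lemma exists_getD_coAux_eq_of_isMax (turnA c : Bool) {D : Finset (ℝ × ℝ)}
    (hinj : Set.InjOn (crossoutKey c) D) {m : ℝ × ℝ} (hm : m ∈ D)
    (hmax : ∀ p ∈ D, crossoutKey c p ≤ crossoutKey c m) :
    ∃ k < D.card, (coAux turnA D).getD k (0, 0) = m ∧
      ((turnA = c ↔ Even k) → k + 1 = D.card) := by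
  induction D using Finset.strongInduction generalizing turnA with
  | H D ih =>
  obtain ⟨x, hx, hxmin, hcons⟩ := coAux_eq_cons turnA ⟨m, hm⟩
  rw [hcons]
  by_cases hxm : x = m
  · subst hxm
    refine ⟨0, Finset.card_pos.mpr ⟨x, hx⟩, rfl, fun hturn => ?_⟩
    obtain rfl : turnA = c := hturn.mpr Even.zero
    have hsingleton : D = {x} := Finset.eq_singleton_iff_unique_mem.mpr
      ⟨hx, fun p hp => hinj hp hx (le_antisymm (hmax p hp) (hxmin p hp))⟩
    simp [hsingleton]
  · have hm' : m ∈ D.erase x := Finset.mem_erase.mpr ⟨Ne.symm hxm, hm⟩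
    obtain ⟨k, hk, hget, hlast⟩ := ih _ (Finset.erase_ssubset hx) (!turnA)
      (hinj.mono (Finset.coe_subset.mpr (Finset.erase_subset x D))) hm'
      (fun p hp => hmax p (Finset.mem_of_mem_erase hp))
    have hcard := Finset.card_erase_add_one hx
    refine ⟨k + 1, by omega, hget, fun hturn => ?_⟩
    have hturn' : (!turnA) = c ↔ Even k := by
      cases turnA <;> cases c <;> simp_all [Nat.even_add_one]
    have hk_last := hlast hturn'
    omega

lemma exists_crossout_eq_of_isMax (c : Bool) {D : Finset (ℝ × ℝ)}
    (hinj : Set.InjOn (crossoutKey c) D) {m : ℝ × ℝ} (hm : m ∈ D)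
    (hmax : ∀ p ∈ D, crossoutKey c p ≤ crossoutKey c m) :
    ∃ i, 1 ≤ i ∧ i ≤ D.card ∧ crossout D i = m ∧ ((c = true ↔ Odd i) → i = D.card) := by
  obtain ⟨k, hk, hget, hlast⟩ := exists_getD_coAux_eq_of_isMax true c hinj hm hmax
  refine ⟨k + 1, by omega, hk, hget, fun hturn => hlast ?_⟩
  rw [Nat.odd_add_one, Nat.not_odd_iff_even] at hturn
  exact eq_comm.trans hturn

/-- Under mutual crossout play the first player eats her/his favourite morsel:
if |D| is even, Alice's favourite is an even-indexed crossout morsel; if |D| is odd,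
Bob's favourite is an odd-indexed crossout morsel. -/
theorem first_player_eats_favourite (D : Finset (ℝ × ℝ)) (hD : TotallyOrderedPrefs D)
    (hne : D.Nonempty) :
    (Even D.card → ∃ i : ℕ, Even i ∧ 1 ≤ i ∧ i ≤ D.card ∧
      ∀ m ∈ D, m.1 ≤ (crossout D i).1) ∧
    (Odd D.card → ∃ i : ℕ, Odd i ∧ 1 ≤ i ∧ i ≤ D.card ∧
      ∀ m ∈ D, m.2 ≤ (crossout D i).2) := by
  constructor
  · intro heven
    obtain ⟨m, hm, hmax⟩ := D.exists_max_image Prod.fst hne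
    obtain ⟨i, hi1, hin, hcross, hlast⟩ := exists_crossout_eq_of_isMax true hD.1 hm hmax
    have hi : Even i := by
      by_contra hodd
      rw [Nat.not_even_iff_odd] at hodd
      exact Nat.not_even_iff_odd.mpr hodd (hlast (iff_of_true rfl hodd) ▸ heven)
    exact ⟨i, hi, hi1, hin, hcross ▸ hmax⟩
  · intro hodd
    obtain ⟨m, hm, hmax⟩ := D.exists_max_image Prod.snd hne
    obtain ⟨i, hi1, hin, hcross, hlast⟩ := exists_crossout_eq_of_isMax false hD.2 hm hmax
    have hi : Odd i := by
      by_contra heven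
      exact heven (hlast (iff_of_false Bool.false_ne_true heven) ▸ hodd)
    exact ⟨i, hi, hi1, hin, hcross ▸ hmax⟩
end

section
/- In any permutation dinner of even size n = 2k played with both players using the crossout strategy, Alice never eats her least favourite morsel; more generally, for every j ≥ 0, Alice eats at most j of her 2j+1 least favourite morsels. -/
/-! Fix a threshold `c` and let `a` morsels have first coordinate at most `c`. A step of the
crossout sequence that removes the morsel of least first coordinate (Bob's morsel) takes one of
these `a` whenever `a > 0`, and a step that removes the morsel of least second coordinate
(Alice's morsel) takes at most one of them. By induction on the number of morsels, Alice gets at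
most `⌊a/2⌋` of them when the sequence starts with a step of the first kind, and at most `⌈a/2⌉`
when it starts with one of the second kind. In a permutation dinner only `2j+1` morsels have
first coordinate at most `2j+1`, so Alice eats at most `j` of them. -/

open Finset

open scoped Classical

theorem card_filter_Icc_one_eq_card_filter_range (n : ℕ) (P : ℕ → Prop) [DecidablePred P] :
    #{i ∈ Icc 1 n | P i} = #{m ∈ range n | P (m + 1)} := by
  have hIcc : Icc 1 n = (range n).image (· + 1) := by
    rw [range_eq_Ico, image_add_right_Ico, zero_add, Ico_add_one_right_eq_Icc]
  rw [hIcc, filter_image, card_image_of_injective _ (add_left_injective 1)]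

theorem card_filter_range_getD_cons {α : Type*} (d a : α) (l : List α) (R : ℕ → α → Prop)
    [∀ m, DecidablePred (R m)] (n : ℕ) :
    #{m ∈ range (n + 1) | R m ((a :: l).getD m d)} =
      #{m ∈ range n | R (m + 1) (l.getD m d)} + if R 0 a then 1 else 0 := by
  simp only [card_filter, sum_range_succ', List.getD_cons_succ, List.getD_cons_zero]

theorem card_filter_erase_add_ite {α : Type*} [DecidableEq α] (s : Finset α) (P : α → Prop)
    [DecidablePred P] {a : α} (ha : a ∈ s) :
    #{x ∈ s.erase a | P x} + (if P a then 1 else 0) = #{x ∈ s | P x} := by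
  rw [filter_erase]
  split_ifs with hPa
  · exact card_erase_add_one (mem_filter.mpr ⟨ha, hPa⟩)
  · rw [erase_eq_of_notMem (fun h => hPa (mem_filter.mp h).2), add_zero]

theorem exists_coAux_eq_cons (turnA : Bool) {D : Finset (ℝ × ℝ)} (hD : D.Nonempty) :
    ∃ p ∈ D, (if turnA then ∀ q ∈ D, p.1 ≤ q.1 else ∀ q ∈ D, p.2 ≤ q.2) ∧
      coAux turnA D = p :: coAux (!turnA) (D.erase p) := by
  rw [coAux, dif_pos hD]
  cases turnA
  · exact ⟨_, (exists_min_image D Prod.snd hD).choose_spec.1,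
      (exists_min_image D Prod.snd hD).choose_spec.2, rfl⟩
  · exact ⟨_, (exists_min_image D Prod.fst hD).choose_spec.1,
      (exists_min_image D Prod.fst hD).choose_spec.2, rfl⟩

/-- Alice eats the 0-based position `m` of `coAux turnA D` iff `if turnA then Odd m else Even m`. -/
theorem card_aliceEats_coAux_le (c : ℝ) (turnA : Bool) (D : Finset (ℝ × ℝ)) :
    #{m ∈ range D.card | (if turnA then Odd m else Even m) ∧ ((coAux turnA D).getD m (0, 0)).1 ≤ c}
      ≤ (#{p ∈ D | p.1 ≤ c} + if turnA then 0 else 1) / 2 := by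
  induction hn : D.card generalizing D turnA with
  | zero => simp
  | succ n ih =>
    obtain ⟨p, hpD, hpmin, hcons⟩ := exists_coAux_eq_cons turnA (card_pos.mp (by omega : 0 < #D))
    have hrest := ih (!turnA) (D.erase p) (by rw [card_erase_of_mem hpD, hn, Nat.add_sub_cancel])
    have hsplit := card_filter_erase_add_ite D (fun q : ℝ × ℝ => q.1 ≤ c) hpD
    rw [hcons, card_filter_range_getD_cons (0, 0) p _
      (fun m x => (if turnA then Odd m else Even m) ∧ x.1 ≤ c)]
    cases turnA
    · simp only [Bool.not_false, Bool.false_eq_true, ↓reduceIte, Nat.even_add_one,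
        Nat.not_even_iff_odd, Even.zero, true_and, add_zero] at hrest hsplit ⊢
      split_ifs at hsplit ⊢ <;> omega
    · simp only [Bool.not_true, Bool.false_eq_true, ↓reduceIte, Nat.odd_add_one,
        Nat.not_odd_iff_even, Nat.not_odd_zero, false_and, add_zero] at hrest hsplit ⊢
      by_cases hpc : p.1 ≤ c
      · rw [if_pos hpc] at hsplit
        omega
      · have hnone : #{q ∈ D | q.1 ≤ c} = 0 :=
          card_eq_zero.mpr (filter_eq_empty_iff.mpr fun q hq hqc => hpc ((hpmin q hq).trans hqc))
        rw [if_neg hpc] at hsplit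
        omega

section Dinner

variable (g : ℕ → ℝ) (n : ℕ)

theorem card_image_Icc_natCast_prod :
    #((Icc 1 n).image fun i : ℕ => ((i : ℝ), g i)) = n := by
  rw [card_image_of_injective _ fun x y h => Nat.cast_injective (congrArg Prod.fst h),
    Nat.card_Icc, Nat.add_sub_cancel]

theorem card_filter_fst_le_image_Icc_natCast_prod (m : ℕ) :
    #{p ∈ (Icc 1 n).image (fun i : ℕ => ((i : ℝ), g i)) | p.1 ≤ (m : ℝ)} ≤ m := by
  rw [filter_image]
  refine card_image_le.trans ((card_le_card fun i hi => ?_).trans (Nat.card_Icc 1 m).le)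
  simp only [mem_filter, mem_Icc, Nat.cast_le] at hi ⊢
  exact ⟨hi.1.1, hi.2⟩

end Dinner

theorem alice_avoids_least_favourites_general (n : ℕ) (b : ℕ → ℕ) (D : Finset (ℝ × ℝ))
    (hD : D = (Finset.Icc 1 n).image (fun i : ℕ => ((i : ℝ), (b i : ℝ)))) :
    (∀ i ∈ Finset.Icc 1 n, Even i → (crossout D i).1 ≠ 1) ∧
    ∀ j : ℕ,
      ((Finset.Icc 1 n).filter
        (fun i => Even i ∧ (crossout D i).1 ≤ (2 * j + 1 : ℝ))).card ≤ j := by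
  have hcard : #D = n := hD ▸ card_image_Icc_natCast_prod _ n
  have hcount (j : ℕ) : #{i ∈ Icc 1 n | Even i ∧ (crossout D i).1 ≤ (2 * j + 1 : ℝ)} ≤ j :=
    calc #{i ∈ Icc 1 n | Even i ∧ (crossout D i).1 ≤ (2 * j + 1 : ℝ)}
        = #{m ∈ range #D | Odd m ∧ ((coAux true D).getD m (0, 0)).1 ≤ (2 * j + 1 : ℝ)} := by
          rw [card_filter_Icc_one_eq_card_filter_range, hcard]
          simp only [Nat.even_add_one, Nat.not_even_iff_odd, crossout, crossoutList,
            Nat.add_sub_cancel]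
      _ ≤ #{p ∈ D | p.1 ≤ (2 * j + 1 : ℝ)} / 2 := card_aliceEats_coAux_le _ true D
      _ ≤ (2 * j + 1) / 2 := by
          gcongr
          exact_mod_cast hD ▸ card_filter_fst_le_image_Icc_natCast_prod _ n (2 * j + 1)
      _ = j := by omega
  refine ⟨fun i hi hi_even hi_one => ?_, hcount⟩
  have hi_mem : i ∈ {i ∈ Icc 1 n | Even i ∧ (crossout D i).1 ≤ (2 * (0 : ℕ) + 1 : ℝ)} :=
    mem_filter.mpr ⟨hi, hi_even, by simp [hi_one]⟩
  exact (card_pos.mpr ⟨i, hi_mem⟩).ne' (Nat.le_zero.mp (hcount 0))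

/-- In a permutation dinner of even size n = 2k, under mutual crossout play (Alice eats
the even-indexed crossout morsels) Alice never eats her least favourite morsel, and more
generally for every j she eats at most j of her 2j+1 least favourite morsels. -/
theorem alice_avoids_least_favourites (n k : ℕ) (hn : n = 2 * k) (b : ℕ → ℕ)
    (hb : Set.BijOn b (Set.Icc 1 n) (Set.Icc 1 n)) (D : Finset (ℝ × ℝ))
    (hD : D = (Finset.Icc 1 n).image (fun i : ℕ => ((i : ℝ), (b i : ℝ)))) :
    (∀ i ∈ Finset.Icc 1 n, Even i → (crossout D i).1 ≠ 1) ∧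
    ∀ j : ℕ,
      ((Finset.Icc 1 n).filter
        (fun i => Even i ∧ (crossout D i).1 ≤ (2 * j + 1 : ℝ))).card ≤ j :=
  alice_avoids_least_favourites_general n b D hD
end

section
/- The crossout outcome is approximately envy-free: if both players play the crossout strategy on a dinner D of even size n (Alice first, Bob last), then Alice's score is at least the sum of Alice-utilities of the morsels Bob eats, i.e., χ_A(D) ≥ sum of first coordinates of the odd-indexed crossout morsels. -/
open Finset

theorem Finset.sum_Icc_odd_le_sum_Icc_even {M : Type*} [AddCommMonoid M] [PartialOrder M]
    [IsOrderedAddMonoid M] (f : ℕ → M) (m : ℕ) (h : ∀ k < m, f (2 * k + 1) ≤ f (2 * k + 2)) :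
    (∑ i ∈ Icc 1 (2 * m), if Odd i then f i else 0) ≤
      ∑ i ∈ Icc 1 (2 * m), if Even i then f i else 0 := by
  induction m with
  | zero => simp
  | succ m ih =>
    have hodd : Odd (2 * m + 1) := odd_two_mul_add_one m
    have heven : Even (2 * m + 2) := ⟨m + 1, by ring⟩
    rw [show 2 * (m + 1) = 2 * m + 1 + 1 by ring, sum_Icc_succ_top (by omega),
      sum_Icc_succ_top (by omega), sum_Icc_succ_top (by omega), sum_Icc_succ_top (by omega)]
    simp only [hodd, heven, Nat.not_even_iff_odd.mpr hodd, Nat.not_odd_iff_even.mpr heven,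
      if_true, if_false, add_zero]
    exact add_le_add (ih fun k hk => h k (by omega)) (h m (by omega))

lemma crossoutList_eq_cons_cons (D : Finset (ℝ × ℝ)) (hD : 2 ≤ D.card) :
    ∃ a ∈ D, ∃ b ∈ D.erase a, (∀ x ∈ D, a.1 ≤ x.1) ∧
      crossoutList D = a :: b :: crossoutList ((D.erase a).erase b) := by
  have hne : D.Nonempty := card_pos.mp (by omega)
  obtain ⟨haD, hamin⟩ := (exists_min_image D Prod.fst hne).choose_spec
  have hne' : (D.erase (exists_min_image D Prod.fst hne).choose).Nonempty := by
    rw [← card_pos, card_erase_of_mem haD]; omega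
  refine ⟨_, haD, _, (exists_min_image _ Prod.snd hne').choose_spec.1, hamin, ?_⟩
  rw [crossoutList, coAux, dif_pos hne]
  simp only [if_true, Bool.not_true]
  rw [coAux, dif_pos hne']
  rfl

/-- Alice's crossout pick `m_{2k+1}` is the minimum of her utility over all morsels still on
the table, Bob's next pick `m_{2k+2}` among them. -/
lemma crossout_fst_le_fst_succ (D : Finset (ℝ × ℝ)) (k : ℕ) (hk : 2 * k + 2 ≤ D.card) :
    (crossout D (2 * k + 1)).1 ≤ (crossout D (2 * k + 2)).1 := by
  induction k generalizing D with
  | zero =>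
    obtain ⟨a, -, b, hb, hamin, hlist⟩ := crossoutList_eq_cons_cons D hk
    simpa [crossout, hlist] using hamin b (mem_of_mem_erase hb)
  | succ k ih =>
    obtain ⟨a, ha, b, hb, -, hlist⟩ := crossoutList_eq_cons_cons D (by omega)
    have hcard : ((D.erase a).erase b).card = D.card - 2 := by
      rw [card_erase_of_mem hb, card_erase_of_mem ha]; omega
    have hshift : ∀ i, crossout D (i + 3) = crossout ((D.erase a).erase b) (i + 1) := by
      simp [crossout, hlist]
    rw [show 2 * (k + 1) + 1 = 2 * k + 3 by ring, show 2 * (k + 1) + 2 = (2 * k + 1) + 3 by ring,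
      hshift, hshift]
    exact ih _ (by omega)

theorem crossout_envy_free_first_player_general (D : Finset (ℝ × ℝ))
    (hn : Even D.card) :
    (∑ i ∈ Finset.Icc 1 D.card, if Odd i then (crossout D i).1 else 0) ≤ chiA D := by
  obtain ⟨m, hm⟩ := hn
  rw [chiA, show D.card = 2 * m by omega]
  exact sum_Icc_odd_le_sum_Icc_even _ m fun k hk => crossout_fst_le_fst_succ D k (by omega)

/-- Approximate envy-freeness: with |D| even, Alice's crossout score is at least the sum
of Alice-utilities of the morsels Bob eats (the odd-indexed crossout morsels). -/
theorem crossout_envy_free_first_player (D : Finset (ℝ × ℝ)) (hD : TotallyOrderedPrefs D)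
    (hn : Even D.card) :
    (∑ i ∈ Finset.Icc 1 D.card, if Odd i then (crossout D i).1 else 0) ≤ chiA D :=
  crossout_envy_free_first_player_general D hn
end
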